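/- Let c(μ,ρ) = 1 + 2·exp(μ) + exp(2μ+ρ). For any real ε₁, ε₂ with |ε₁| ≤ 1 and |2ε₁+ε₂| ≤ 1, the Kullback–Leibler divergence between the dyad distributions with parameters (μ,ρ) and (μ+ε₁, ρ+ε₂) satisfies KL ≤ (2e^μ(ε₁+ε₁²) + e^{2μ+ρ}(2ε₁+ε₂+(2ε₁+ε₂)²))/c(μ,ρ) − (2e^μ ε₁ + e^{2μ+ρ}(2ε₁+ε₂))/c(μ,ρ). -/
import Mathlib


open Real

lemma exp_le_quad {x : ℝ} (hx : |x| ≤ 1) : Real.exp x ≤ 1 + x + x^2 := by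
  have h := Real.exp_bound hx (by norm_num : 0 < 2)
  have hsum : (∑ i ∈ Finset.range 2, x ^ i / (Nat.factorial i : ℝ)) = 1 + x := by
    simp [Finset.sum_range_succ]
  rw [hsum, sq_abs] at h
  norm_num [Nat.factorial] at h
  have := (abs_le.mp h).2
  nlinarith [sq_nonneg x]

/-- KL divergence bound between homogeneous dyad distributions with parameters (μ,ρ)
and (μ+ε₁, ρ+ε₂), for |ε₁| ≤ 1 and |2ε₁+ε₂| ≤ 1. -/
theorem stmt9 (μ ρ ε₁ ε₂ : ℝ) (h1 : |ε₁| ≤ 1) (h2 : |2*ε₁ + ε₂| ≤ 1) :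
    let c1 : ℝ := 1 + 2 * Real.exp μ + Real.exp (2*μ + ρ)
    let c2 : ℝ := 1 + 2 * Real.exp (μ + ε₁) + Real.exp (2*(μ + ε₁) + ρ + ε₂)
    let KL : ℝ :=
      (1/c1) * Real.log ((1/c1) / (1/c2))
      + 2 * (Real.exp μ / c1) * Real.log ((Real.exp μ / c1) / (Real.exp (μ + ε₁) / c2))
      + (Real.exp (2*μ + ρ) / c1)
          * Real.log ((Real.exp (2*μ + ρ) / c1) / (Real.exp (2*(μ + ε₁) + ρ + ε₂) / c2))
    1 ≤ c1 ∧
    KL ≤ (2 * Real.exp μ * (ε₁ + ε₁^2)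
            + Real.exp (2*μ + ρ) * ((2*ε₁ + ε₂) + (2*ε₁ + ε₂)^2)) / c1
         - (2 * Real.exp μ * ε₁ + Real.exp (2*μ + ρ) * (2*ε₁ + ε₂)) / c1 := by
  intro c1 c2 KL
  have e1 := Real.exp_pos μ
  have e2 := Real.exp_pos (2*μ + ρ)
  have e3 := Real.exp_pos (μ + ε₁)
  have e4 := Real.exp_pos (2*(μ + ε₁) + ρ + ε₂)
  have hc1 : 0 < c1 := by positivity
  have hc2 : 0 < c2 := by positivity
  refine ⟨?_, ?_⟩
  · show (1:ℝ) ≤ 1 + 2 * Real.exp μ + Real.exp (2*μ + ρ)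
    nlinarith
  -- rewrite KL
  have hKL : KL = (Real.log c2 - Real.log c1)
      - (2 * Real.exp μ * ε₁ + Real.exp (2*μ + ρ) * (2*ε₁ + ε₂)) / c1 := by
    show (1/c1) * Real.log ((1/c1) / (1/c2))
      + 2 * (Real.exp μ / c1) * Real.log ((Real.exp μ / c1) / (Real.exp (μ + ε₁) / c2))
      + (Real.exp (2*μ + ρ) / c1)
          * Real.log ((Real.exp (2*μ + ρ) / c1) / (Real.exp (2*(μ + ε₁) + ρ + ε₂) / c2)) = _
    have L : ∀ a b : ℝ, 0 < a → 0 < b →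
        Real.log ((a/c1)/(b/c2)) = Real.log a - Real.log b + (Real.log c2 - Real.log c1) := by
      intro a b ha hb
      rw [Real.log_div (by positivity) (by positivity),
        Real.log_div (by positivity) (by positivity),
        Real.log_div (by positivity) (by positivity)]
      ring
    rw [L 1 1 one_pos one_pos, L _ _ e1 e3, L _ _ e2 e4,
      Real.log_exp, Real.log_exp, Real.log_exp, Real.log_exp, Real.log_one]
    field_simp
    ring
  rw [hKL]
  have key : Real.log c2 - Real.log c1 ≤
      (2 * Real.exp μ * (ε₁ + ε₁^2)
        + Real.exp (2*μ + ρ) * ((2*ε₁ + ε₂) + (2*ε₁ + ε₂)^2)) / c1 := by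
    have hlog : Real.log c2 - Real.log c1 ≤ c2/c1 - 1 := by
      rw [← Real.log_div (ne_of_gt hc2) (ne_of_gt hc1)]
      exact Real.log_le_sub_one_of_pos (by positivity)
    have hq1 : Real.exp (μ + ε₁) ≤ Real.exp μ * (1 + ε₁ + ε₁^2) := by
      rw [Real.exp_add]
      exact mul_le_mul_of_nonneg_left (exp_le_quad h1) e1.le
    have hq2 : Real.exp (2*(μ + ε₁) + ρ + ε₂)
        ≤ Real.exp (2*μ + ρ) * (1 + (2*ε₁ + ε₂) + (2*ε₁ + ε₂)^2) := by
      have : 2*(μ + ε₁) + ρ + ε₂ = (2*μ + ρ) + (2*ε₁ + ε₂) := by ring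
      rw [this, Real.exp_add]
      exact mul_le_mul_of_nonneg_left (exp_le_quad h2) e2.le
    have hnum : c2 - c1 ≤ 2 * Real.exp μ * (ε₁ + ε₁^2)
        + Real.exp (2*μ + ρ) * ((2*ε₁ + ε₂) + (2*ε₁ + ε₂)^2) := by
      show 1 + 2 * Real.exp (μ + ε₁) + Real.exp (2*(μ + ε₁) + ρ + ε₂)
        - (1 + 2 * Real.exp μ + Real.exp (2*μ + ρ)) ≤ _
      nlinarith
    calc Real.log c2 - Real.log c1 ≤ c2/c1 - 1 := hlog
      _ = (c2 - c1)/c1 := by field_simp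
      _ ≤ _ := by gcongr
  linarith
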